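/- Let I = (𝒳, 𝒞) be an instance of 23SAT containing clauses c₁, c₂ and literals l₁, l₂ with {l₁, l₂} ⊆ c₁ and {¬l₁, ¬l₂} ⊆ c₂, where l₁ is a minor literal and ¬l₂ is a minor literal. Then I is satisfiable if and only if the instance obtained from I by deleting all clauses containing ¬l₁ or l₂ is satisfiable. -/

import Mathlib

/-- A literal: a variable together with a polarity. -/
structure Lit (α : Type*) where
  var : α
  pos : Bool
deriving DecidableEq

/-- The negation of a literal. -/
def Lit.neg {α : Type*} (l : Lit α) : Lit α := ⟨l.var, !l.pos⟩

/-- Evaluation of a literal under a truth assignment. -/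
def Lit.eval {α : Type*} (t : α → Bool) (l : Lit α) : Bool :=
  if l.pos then t l.var else !(t l.var)

/-- A truth assignment satisfies a clause if it contains a true literal. -/
def SatisfiesClause {α : Type*} (t : α → Bool) (c : Finset (Lit α)) : Prop :=
  ∃ l ∈ c, Lit.eval t l = true

/-- A set of clauses is satisfiable. -/
def SatInstance {α : Type*} (𝒞 : Finset (Finset (Lit α))) : Prop :=
  ∃ t : α → Bool, ∀ c ∈ 𝒞, SatisfiesClause t c

/-- A literal is major if it occurs in at least two clauses of `𝒞`. -/
def MajorLit {α : Type*} [DecidableEq α] (𝒞 : Finset (Finset (Lit α))) (l : Lit α) : Prop :=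
  2 ≤ (𝒞.filter (fun c => l ∈ c)).card

/-- A literal is minor if it occurs in exactly one clause of `𝒞`. -/
def MinorLit {α : Type*} [DecidableEq α] (𝒞 : Finset (Finset (Lit α))) (l : Lit α) : Prop :=
  (𝒞.filter (fun c => l ∈ c)).card = 1

/-! Make `¬l₁` and `l₂` true and keep the given assignment elsewhere. A surviving clause avoids
`l₁`, whose only clause `c₁` contains `l₂`, and `¬l₂`, whose only clause `c₂` contains `¬l₁`;
so it mentions neither variable and keeps its true literal. -/

section

variable {α : Type*}

namespace Lit

@[simp]
lemma neg_neg (l : Lit α) : l.neg.neg = l := by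
  cases l
  simp [Lit.neg]

lemma eq_or_eq_neg_of_var_eq {l m : Lit α} (h : l.var = m.var) : l = m ∨ l = m.neg := by
  obtain ⟨v, b⟩ := l
  obtain ⟨w, c⟩ := m
  simp only [Lit.neg] at h ⊢
  subst h
  cases b <;> cases c <;> simp

lemma var_ne_of_ne_of_ne_neg {l m : Lit α} (h : l ≠ m) (hneg : l ≠ m.neg) : l.var ≠ m.var :=
  fun hv => (eq_or_eq_neg_of_var_eq hv).elim h hneg

variable [DecidableEq α]

lemma eval_update_var_self (t : α → Bool) (l : Lit α) :
    l.eval (Function.update t l.var l.pos) = true := by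
  cases h : l.pos <;> simp [Lit.eval, h]

lemma eval_update_of_var_ne {t : α → Bool} {l : Lit α} {x : α} (b : Bool) (h : l.var ≠ x) :
    l.eval (Function.update t x b) = l.eval t := by
  simp [Lit.eval, Function.update_of_ne h]

end Lit

lemma SatInstance.mono {𝒞 𝒟 : Finset (Finset (Lit α))} (h𝒟 : 𝒟 ⊆ 𝒞) (h : SatInstance 𝒞) :
    SatInstance 𝒟 :=
  let ⟨t, ht⟩ := h
  ⟨t, fun c hc => ht c (h𝒟 hc)⟩

variable [DecidableEq α]

lemma MinorLit.eq_of_mem {𝒞 : Finset (Finset (Lit α))} {l : Lit α} (h : MinorLit 𝒞 l)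
    {c c' : Finset (Lit α)} (hc : c ∈ 𝒞) (hlc : l ∈ c) (hc' : c' ∈ 𝒞) (hlc' : l ∈ c') :
    c = c' :=
  Finset.card_le_one.mp h.le c (Finset.mem_filter.mpr ⟨hc, hlc⟩) c'
    (Finset.mem_filter.mpr ⟨hc', hlc'⟩)

/-- `hkept` says that `{a, b}` is an autarky. -/
theorem SatInstance.of_filter_not_mem {𝒞 : Finset (Finset (Lit α))} {a b : Lit α}
    (hab : a.var ≠ b.var) (hkept : ∀ c ∈ 𝒞, a ∉ c → b ∉ c → a.neg ∉ c ∧ b.neg ∉ c)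
    (h : SatInstance (𝒞.filter fun c => a ∉ c ∧ b ∉ c)) : SatInstance 𝒞 := by
  obtain ⟨t, ht⟩ := h
  refine ⟨Function.update (Function.update t a.var a.pos) b.var b.pos, fun c hc => ?_⟩
  by_cases ha : a ∈ c
  · exact ⟨a, ha, by rw [Lit.eval_update_of_var_ne _ hab, Lit.eval_update_var_self]⟩
  by_cases hb : b ∈ c
  · exact ⟨b, hb, Lit.eval_update_var_self _ b⟩
  obtain ⟨l, hl, hlt⟩ := ht c (Finset.mem_filter.mpr ⟨hc, ha, hb⟩)
  obtain ⟨ha', hb'⟩ := hkept c hc ha hb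
  have hla : l.var ≠ a.var := Lit.var_ne_of_ne_of_ne_neg (ne_of_mem_of_not_mem hl ha)
    (ne_of_mem_of_not_mem hl ha')
  have hlb : l.var ≠ b.var := Lit.var_ne_of_ne_of_ne_neg (ne_of_mem_of_not_mem hl hb)
    (ne_of_mem_of_not_mem hl hb')
  exact ⟨l, hl, by rw [Lit.eval_update_of_var_ne _ hlb, Lit.eval_update_of_var_ne _ hla, hlt]⟩

end

theorem delete_clauses_minor_case_general {α : Type*} [DecidableEq α]
    (𝒞 : Finset (Finset (Lit α)))
    (hcons : ∀ c ∈ 𝒞, ∀ l ∈ c, l.neg ∉ c)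
    (c₁ c₂ : Finset (Lit α)) (hc₁ : c₁ ∈ 𝒞) (hc₂ : c₂ ∈ 𝒞)
    (l₁ l₂ : Lit α) (hll : l₁ ≠ l₂)
    (h₁ : l₁ ∈ c₁) (h₂ : l₂ ∈ c₁) (h₃ : l₁.neg ∈ c₂) (h₄ : l₂.neg ∈ c₂)
    (hm₁ : MinorLit 𝒞 l₁) (hm₂ : MinorLit 𝒞 l₂.neg) :
    SatInstance 𝒞 ↔
      SatInstance (𝒞.filter (fun c => l₁.neg ∉ c ∧ l₂ ∉ c)) := by
  refine ⟨SatInstance.mono (Finset.filter_subset _ _), SatInstance.of_filter_not_mem ?_ ?_⟩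
  · have hne : l₂ ≠ l₁.neg := fun h => hcons c₁ hc₁ l₁ h₁ (h ▸ h₂)
    exact (Lit.var_ne_of_ne_of_ne_neg hll.symm hne).symm
  · intro c hc hl₁ hl₂
    refine ⟨fun h => ?_, fun h => ?_⟩
    · rw [Lit.neg_neg] at h
      exact hl₂ (hm₁.eq_of_mem hc h hc₁ h₁ ▸ h₂)
    · exact hl₁ (hm₂.eq_of_mem hc h hc₂ h₄ ▸ h₃)

theorem delete_clauses_minor_case {α : Type*} [DecidableEq α]
    (𝒞 : Finset (Finset (Lit α)))
    (hsize : ∀ c ∈ 𝒞, c.card = 2 ∨ c.card = 3)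
    (hcons : ∀ c ∈ 𝒞, ∀ l ∈ c, l.neg ∉ c)
    (hmaj : ∀ c ∈ 𝒞, ∀ l₁ ∈ c, ∀ l₂ ∈ c, MajorLit 𝒞 l₁ → MajorLit 𝒞 l₂ → l₁ = l₂)
    (c₁ c₂ : Finset (Lit α)) (hc₁ : c₁ ∈ 𝒞) (hc₂ : c₂ ∈ 𝒞) (hcc : c₁ ≠ c₂)
    (l₁ l₂ : Lit α) (hll : l₁ ≠ l₂)
    (h₁ : l₁ ∈ c₁) (h₂ : l₂ ∈ c₁) (h₃ : l₁.neg ∈ c₂) (h₄ : l₂.neg ∈ c₂)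
    (hm₁ : MinorLit 𝒞 l₁) (hm₂ : MinorLit 𝒞 l₂.neg) :
    SatInstance 𝒞 ↔
      SatInstance (𝒞.filter (fun c => l₁.neg ∉ c ∧ l₂ ∉ c)) :=
  delete_clauses_minor_case_general 𝒞 hcons c₁ c₂ hc₁ hc₂ l₁ l₂ hll h₁ h₂ h₃ h₄ hm₁ hm₂
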